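/- Let G be a cubic graph with a Petersen coloring φ: E(G) → E(Petersen). Then G has a Berge–Fulkerson cover: there exist six perfect matchings of G such that every edge of G is contained in exactly two of them. -/

import Mathlib

open Finset

def IsPerfectMatchingFinset {V : Type*} [Fintype V] [DecidableEq V]
    (G : SimpleGraph V) (M : Finset (Sym2 V)) : Prop :=
  (∀ e ∈ M, e ∈ G.edgeSet) ∧ ∀ v : V, (M.filter (fun e => v ∈ e)).card = 1

/-- The Petersen graph as the Kneser graph `K(5,2)`. -/
def petersen : SimpleGraph {s : Finset (Fin 5) // s.card = 2} where
  Adj a b := Disjoint a.1 b.1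
  symm := ⟨fun a b h => h.symm⟩
  loopless := ⟨fun a h => by
    have h2 := a.2
    simp only [disjoint_self] at h
    simp [h] at h2⟩

instance : DecidableRel petersen.Adj :=
  fun a b => inferInstanceAs (Decidable (Disjoint a.1 b.1))

/-- Three edges are mutually adjacent: pairwise distinct and pairwise sharing a
vertex. -/
def MutuallyAdjacent {W : Type*} (e f g : Sym2 W) : Prop :=
  e ≠ f ∧ e ≠ g ∧ f ≠ g ∧ (∃ v, v ∈ e ∧ v ∈ f) ∧ (∃ v, v ∈ e ∧ v ∈ g) ∧
    ∃ v, v ∈ f ∧ v ∈ g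

/-- A Petersen coloring of `G`: a map from edges of `G` to edges of the
Petersen graph sending mutually adjacent triples of edges to mutually adjacent
triples of edges. -/
def IsPetersenColoring {V : Type*} (G : SimpleGraph V)
    (φ : Sym2 V → Sym2 {s : Finset (Fin 5) // s.card = 2}) : Prop :=
  (∀ e ∈ G.edgeSet, φ e ∈ petersen.edgeSet) ∧
    ∀ e ∈ G.edgeSet, ∀ f ∈ G.edgeSet, ∀ g ∈ G.edgeSet,
      MutuallyAdjacent e f g → MutuallyAdjacent (φ e) (φ f) (φ g)

/-!
At a vertex `v` of `G` the three edges are mutually adjacent, so their images are three mutually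
adjacent edges of the Petersen graph; as the Petersen graph is triangle-free and cubic, these are
exactly the three edges at some vertex `p`. Hence `φ` is a bijection from the edges at `v` onto the
edges at `p`, and the preimage of a perfect matching of the Petersen graph meets the edges at `v`
exactly once, i.e. is a perfect matching of `G`. Pulling back the six perfect matchings of the
Petersen graph, each edge `e` of `G` lies in as many of them as `φ e` does, namely two.
-/

open SimpleGraph

section Pullback

variable {V W : Type*} {G : SimpleGraph V} {H : SimpleGraph W}

lemma MutuallyAdjacent.exists_common_mem (hH : H.CliqueFree 3) {e f g : Sym2 W}
    (he : e ∈ H.edgeSet) (hf : f ∈ H.edgeSet) (hg : g ∈ H.edgeSet)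
    (h : MutuallyAdjacent e f g) : ∃ p, p ∈ e ∧ p ∈ f ∧ p ∈ g := by
  obtain ⟨-, -, -, ⟨x, hxe, hxf⟩, ⟨y, hye, hyg⟩, ⟨z, hzf, hzg⟩⟩ := h
  by_cases hxy : x = y
  · exact ⟨x, hxe, hxf, hxy ▸ hyg⟩
  by_cases hxz : x = z
  · exact ⟨x, hxe, hxf, hxz ▸ hzg⟩
  by_cases hyz : y = z
  · exact ⟨y, hye, hyz ▸ hzf, hyg⟩
  rw [(Sym2.mem_and_mem_iff hxy).mp ⟨hxe, hye⟩, mem_edgeSet] at he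
  rw [(Sym2.mem_and_mem_iff hxz).mp ⟨hxf, hzf⟩, mem_edgeSet] at hf
  rw [(Sym2.mem_and_mem_iff hyz).mp ⟨hyg, hzg⟩, mem_edgeSet] at hg
  classical
  exact (hH {x, y, z} (is3Clique_triple_iff.mpr ⟨he, hf, hg⟩)).elim

variable [Fintype V] [DecidableEq V] [DecidableRel G.Adj]

lemma exists_incidenceFinset_eq_mutuallyAdjacent {v : V} (hv : G.degree v = 3) :
    ∃ e f g, G.incidenceFinset v = {e, f, g} ∧
      e ∈ G.edgeSet ∧ f ∈ G.edgeSet ∧ g ∈ G.edgeSet ∧ MutuallyAdjacent e f g := by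
  rw [← card_incidenceFinset_eq_degree] at hv
  obtain ⟨e, f, g, hef, heg, hfg, hT⟩ := card_eq_three.mp hv
  have hinc : ∀ x ∈ ({e, f, g} : Finset _), x ∈ G.edgeSet ∧ v ∈ x := fun x hx =>
    (G.mem_incidenceFinset v x).mp (hT ▸ hx)
  obtain ⟨heE, hev⟩ := hinc e (by simp)
  obtain ⟨hfE, hfv⟩ := hinc f (by simp)
  obtain ⟨hgE, hgv⟩ := hinc g (by simp)
  exact ⟨e, f, g, hT, heE, hfE, hgE,
    hef, heg, hfg, ⟨v, hev, hfv⟩, ⟨v, hev, hgv⟩, ⟨v, hfv, hgv⟩⟩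

variable [Fintype W] [DecidableEq W] [DecidableRel H.Adj] {φ : Sym2 V → Sym2 W}

lemma exists_bijOn_incidenceSet (hH : H.CliqueFree 3) (hHdeg : ∀ p, H.degree p ≤ 3)
    (hedge : ∀ e ∈ G.edgeSet, φ e ∈ H.edgeSet)
    (hadj : ∀ e ∈ G.edgeSet, ∀ f ∈ G.edgeSet, ∀ g ∈ G.edgeSet,
      MutuallyAdjacent e f g → MutuallyAdjacent (φ e) (φ f) (φ g))
    {v : V} (hv : G.degree v = 3) : ∃ p, Set.BijOn φ (G.incidenceSet v) (H.incidenceSet p) := by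
  obtain ⟨e, f, g, hT, heE, hfE, hgE, hmut⟩ := exists_incidenceFinset_eq_mutuallyAdjacent hv
  have hmut' := hadj e heE f hfE g hgE hmut
  obtain ⟨p, hpe, hpf, hpg⟩ :=
    hmut'.exists_common_mem hH (hedge e heE) (hedge f hfE) (hedge g hgE)
  obtain ⟨hef, heg, hfg, -⟩ := hmut'
  have himg : (G.incidenceFinset v).image φ = {φ e, φ f, φ g} := by simp [hT]
  have hcard : #({φ e, φ f, φ g} : Finset _) = 3 :=
    card_eq_three.mpr ⟨_, _, _, hef, heg, hfg, rfl⟩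
  have hsub : ({φ e, φ f, φ g} : Finset _) ⊆ H.incidenceFinset p := by
    simp only [insert_subset_iff, singleton_subset_iff, mem_incidenceFinset]
    exact ⟨⟨hedge e heE, hpe⟩, ⟨hedge f hfE, hpf⟩, ⟨hedge g hgE, hpg⟩⟩
  have heq : (G.incidenceFinset v).image φ = H.incidenceFinset p := by
    rw [himg]
    refine eq_of_subset_of_card_le hsub ?_
    rw [card_incidenceFinset_eq_degree, hcard]
    exact hHdeg p
  have hinj : Set.InjOn φ (G.incidenceFinset v) :=
    card_image_iff.mp (by rw [himg, hcard, card_incidenceFinset_eq_degree, hv])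
  refine ⟨p, ?_⟩
  rw [← coe_incidenceFinset, ← coe_incidenceFinset, ← heq, coe_image]
  exact hinj.bijOn_image

lemma IsPerfectMatchingFinset.comap {M : Finset (Sym2 W)} (hM : IsPerfectMatchingFinset H M)
    (hloc : ∀ v, ∃ p, Set.BijOn φ (G.incidenceSet v) (H.incidenceSet p)) :
    IsPerfectMatchingFinset G {e ∈ G.edgeFinset | φ e ∈ M} := by
  refine ⟨fun e he => mem_edgeFinset.mp (mem_filter.mp he).1, fun v => ?_⟩
  obtain ⟨p, hp⟩ := hloc v
  have hbij : Set.BijOn φ (G.incidenceSet v ∩ φ ⁻¹' M) (H.incidenceSet p ∩ M) :=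
    hp.inter_mapsTo (Set.mapsTo_preimage φ _) Set.inter_subset_right
  have hG :
      {e ∈ {e ∈ G.edgeFinset | φ e ∈ M} | v ∈ e} = {e ∈ G.incidenceFinset v | φ e ∈ M} := by
    ext e
    simp only [mem_filter, mem_edgeFinset, mem_incidenceFinset, incidenceSet, Set.mem_ofPred_eq]
    tauto
  have hH : {x ∈ M | p ∈ x} = {x ∈ H.incidenceFinset p | x ∈ M} := by
    ext x
    simp only [mem_filter, mem_incidenceFinset, incidenceSet, Set.mem_ofPred_eq]
    have := hM.1 x
    tauto
  rw [hG, ← hM.2 p, hH]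
  refine Set.BijOn.finsetCard_eq φ ?_
  simp only [coe_filter, mem_incidenceFinset]
  exact hbij

end Pullback

abbrev PetersenVertex := {s : Finset (Fin 5) // s.card = 2}

def PetersenVertex.ofPair (a b : Fin 5) (h : #({a, b} : Finset (Fin 5)) = 2 := by decide) :
    PetersenVertex :=
  ⟨{a, b}, h⟩

open PetersenVertex in
def petersenMatching : Fin 6 → Finset (Sym2 PetersenVertex)
  | 0 => {s(ofPair 0 1, ofPair 3 4), s(ofPair 0 2, ofPair 1 4), s(ofPair 1 2, ofPair 0 3),
      s(ofPair 1 3, ofPair 2 4), s(ofPair 2 3, ofPair 0 4)}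
  | 1 => {s(ofPair 0 1, ofPair 3 4), s(ofPair 0 2, ofPair 1 3), s(ofPair 1 2, ofPair 0 4),
      s(ofPair 0 3, ofPair 2 4), s(ofPair 2 3, ofPair 1 4)}
  | 2 => {s(ofPair 0 1, ofPair 2 4), s(ofPair 0 2, ofPair 3 4), s(ofPair 1 2, ofPair 0 3),
      s(ofPair 1 3, ofPair 0 4), s(ofPair 2 3, ofPair 1 4)}
  | 3 => {s(ofPair 0 1, ofPair 2 4), s(ofPair 0 2, ofPair 1 3), s(ofPair 1 2, ofPair 3 4),
      s(ofPair 0 3, ofPair 1 4), s(ofPair 2 3, ofPair 0 4)}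
  | 4 => {s(ofPair 0 1, ofPair 2 3), s(ofPair 0 2, ofPair 3 4), s(ofPair 1 2, ofPair 0 4),
      s(ofPair 0 3, ofPair 1 4), s(ofPair 1 3, ofPair 2 4)}
  | 5 => {s(ofPair 0 1, ofPair 2 3), s(ofPair 0 2, ofPair 1 4), s(ofPair 1 2, ofPair 3 4),
      s(ofPair 0 3, ofPair 2 4), s(ofPair 1 3, ofPair 0 4)}

lemma petersen_cliqueFree_three : petersen.CliqueFree 3 := by
  intro s hs
  obtain ⟨a, b, c, hab, hac, hbc, -⟩ := is3Clique_iff.mp hs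
  exact (by decide : ∀ a b c : PetersenVertex,
    petersen.Adj a b → petersen.Adj a c → ¬petersen.Adj b c) a b c hab hac hbc

lemma petersen_degree (p : PetersenVertex) : petersen.degree p = 3 := by
  revert p
  decide

lemma isPerfectMatchingFinset_petersenMatching (i : Fin 6) :
    IsPerfectMatchingFinset petersen (petersenMatching i) := by
  revert i
  unfold IsPerfectMatchingFinset
  decide

lemma card_filter_mem_petersenMatching :
    ∀ e ∈ petersen.edgeSet, #{i | e ∈ petersenMatching i} = 2 := by
  decide

/-- A cubic graph with a Petersen coloring has a Berge–Fulkerson cover: six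
perfect matchings such that every edge lies in exactly two of them. -/
theorem stmt15 {V : Type*} [Fintype V] [DecidableEq V]
    (G : SimpleGraph V) [DecidableRel G.Adj]
    (hcubic : ∀ v : V, G.degree v = 3)
    (φ : Sym2 V → Sym2 {s : Finset (Fin 5) // s.card = 2})
    (hφ : IsPetersenColoring G φ) :
    ∃ N : Fin 6 → Finset (Sym2 V),
      (∀ i, IsPerfectMatchingFinset G (N i)) ∧
        ∀ e ∈ G.edgeFinset, (Finset.univ.filter fun i => e ∈ N i).card = 2 := by
  have hloc : ∀ v, ∃ p, Set.BijOn φ (G.incidenceSet v) (petersen.incidenceSet p) := fun v =>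
    exists_bijOn_incidenceSet petersen_cliqueFree_three (fun p => (petersen_degree p).le)
      hφ.1 hφ.2 (hcubic v)
  refine ⟨fun i => {e ∈ G.edgeFinset | φ e ∈ petersenMatching i},
    fun i => (isPerfectMatchingFinset_petersenMatching i).comap hloc, fun e he => ?_⟩
  simpa [he] using card_filter_mem_petersenMatching (φ e) (hφ.1 e (mem_edgeFinset.mp he))
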